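/- Canonical abstraction is sound with respect to embedding: for every 2-valued structure C = ⟨U, ι⟩ over a set of predicates 𝒱 (with U nonempty), C is embedded in its canonical abstraction β(C), witnessed by the map sending each u ∈ U to its canonical name canon(u). -/

import Mathlib

/-- Kleene's three truth values 0, 1/2, 1. -/
inductive TV where
  | zero | half | one
deriving DecidableEq

/-- The information order: `x ⊑ x`, `0 ⊑ 1/2`, `1 ⊑ 1/2`. -/
def TV.infoLe (a b : TV) : Prop := a = b ∨ b = TV.half

open Classical in
/-- Kleene's join: `⊔V = v` if `V = {v}`, else `1/2`. -/
noncomputable def kJoin (V : Set TV) : TV :=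
  if h : ∃ v, V = {v} then h.choose else TV.half


section Structures

variable {P : Type*} {U U' U'' : Type*}

/-- An interpretation of predicates `P` of arities `ar` over a universe `U`,
with truth values in `TV`. -/
abbrev Interp (ar : P → ℕ) (U : Type*) := (p : P) → (Fin (ar p) → U) → TV

/-- A 2-valued interpretation never takes the value 1/2. -/
def TwoValued (ar : P → ℕ) (ι : Interp ar U) : Prop := ∀ p t, ι p t ≠ TV.half

/-- The canonical name of `u`: the set of unary predicates that hold at `u`. -/
def canon (ar : P → ℕ) (ι : Interp ar U) (u : U) : Set P :=
  {p | ar p = 1 ∧ ι p (fun _ => u) = TV.one}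

/-- The universe of the canonical abstraction `β(C)`: all canonical names. -/
def betaUniv (ar : P → ℕ) (ι : Interp ar U) : Type _ :=
  {s : Set P // ∃ u, canon ar ι u = s}

/-- The interpretation of `β(C)` on tuples of sets of predicates:
Kleene join over all concrete tuples with the given canonical names. -/
noncomputable def betaInterpSet (ar : P → ℕ) (ι : Interp ar U)
    (p : P) (c : Fin (ar p) → Set P) : TV :=
  kJoin {v | ∃ t : Fin (ar p) → U, (∀ i, canon ar ι (t i) = c i) ∧ ι p t = v}

/-- The interpretation of the canonical abstraction `β(C)`. -/
noncomputable def betaInterp (ar : P → ℕ) (ι : Interp ar U) :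
    Interp ar (betaUniv ar ι) :=
  fun p c => betaInterpSet ar ι p (fun i => (c i).val)

/-- The canonical map from `C` into `β(C)`, sending `u` to `canon(u)`. -/
def canonMap (ar : P → ℕ) (ι : Interp ar U) (u : U) : betaUniv ar ι :=
  ⟨canon ar ι u, u, rfl⟩

/-- `C` is embedded in `S` via `f`: `f` is surjective and every predicate value is
either preserved or becomes 1/2. -/
def Embeds (ar : P → ℕ) (ι : Interp ar U) (ι' : Interp ar U') (f : U → U') : Prop :=
  Function.Surjective f ∧
    ∀ p (t : Fin (ar p) → U),
      ι p t = ι' p (fun i => f (t i)) ∨ ι' p (fun i => f (t i)) = TV.half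

/-- An isomorphism of 2-valued structures: a bijection preserving interpretations. -/
def IsIso (ar : P → ℕ) (ι : Interp ar U) (ι' : Interp ar U') (φ : U → U') : Prop :=
  Function.Bijective φ ∧ ∀ p (t : Fin (ar p) → U), ι p t = ι' p (fun i => φ (t i))

end Structures

theorem TV.infoLe_kJoin_of_mem {V : Set TV} {v : TV} (hv : v ∈ V) : v.infoLe (kJoin V) := by
  unfold kJoin
  split_ifs with h
  · exact .inl (Set.mem_singleton_iff.mp (h.choose_spec ▸ hv))
  · exact .inr rfl

section CanonicalAbstraction

variable {P U : Type*} (ar : P → ℕ) (ι : Interp ar U)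

theorem canonMap_surjective : Function.Surjective (canonMap ar ι) := by
  rintro ⟨_, u, rfl⟩
  exact ⟨u, rfl⟩

theorem infoLe_betaInterp_canonMap (p : P) (t : Fin (ar p) → U) :
    (ι p t).infoLe (betaInterp ar ι p (fun i => canonMap ar ι (t i))) :=
  TV.infoLe_kJoin_of_mem ⟨t, fun _ => rfl, rfl⟩

end CanonicalAbstraction

theorem canonicalAbstraction_sound_general {P U : Type*} (ar : P → ℕ)
    (ι : Interp ar U) :
    Embeds ar ι (betaInterp ar ι) (canonMap ar ι) :=
  ⟨canonMap_surjective ar ι, infoLe_betaInterp_canonMap ar ι⟩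

/-- Canonical abstraction is sound w.r.t. embedding: `C ⊑ β(C)` via `canon`. -/
theorem canonicalAbstraction_sound {P U : Type*} [Nonempty U] (ar : P → ℕ)
    (ι : Interp ar U) (h2 : TwoValued ar ι) :
    Embeds ar ι (betaInterp ar ι) (canonMap ar ι) :=
  canonicalAbstraction_sound_general ar ι
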